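/- arXiv:1701.01160 — 4 statements merged into one kernel-verified Lean document; each statement's English description precedes it below -/
import Mathlib

section
/- Let n ≥ 2 be an integer. Every complex root α of the polynomial f_{1,n}(X) satisfies 1 ≤ |α| < (n+1)^{2/n}. -/
open Polynomial

/-- `f1 n = X^(n-1) + 2 X^(n-2) + ⋯ + (n-1) X + n = Σ_{k=1}^n k · X^(n-k)` over `ℤ`. -/
noncomputable def f1 (n : ℕ) : Polynomial ℤ :=
  ∑ k ∈ Finset.Icc 1 n, C (k : ℤ) * X ^ (n - k)

/-!
Multiplying by `X - 1` telescopes the coefficients of `f1 n`: `(X - 1) f1 n = X + X² + ⋯ + Xⁿ - n`,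
and multiplying once more gives `(X - 1)² f1 n = X^(n+1) - (n+1) X + n`.
At a root `α`, the first identity says `α + ⋯ + αⁿ = n`, which is impossible for `|α| < 1`.
The second gives `|α|^(n+1) ≤ (n+1)|α| + n ≤ (2n+1)|α|`, so `|α|ⁿ ≤ 2n + 1 < (n+1)²`.
-/

open Finset

theorem f1_succ (n : ℕ) : f1 (n + 1) = X * f1 n + (n + 1 : ℤ[X]) := by
  rw [f1, sum_Icc_succ_top (by omega), f1, mul_sum]
  congr 1
  · refine sum_congr rfl fun k hk => ?_
    rw [Nat.sub_add_comm (mem_Icc.mp hk).2, pow_succ]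
    ring
  · simp

theorem sub_one_mul_f1 (n : ℕ) : (X - 1) * f1 n = X * ∑ i ∈ range n, X ^ i - (n : ℤ[X]) := by
  induction n with
  | zero => simp [f1]
  | succ n ih =>
    rw [f1_succ, geom_sum_succ]
    push_cast
    linear_combination X * ih

theorem sub_one_sq_mul_f1 (n : ℕ) :
    (X - 1) ^ 2 * f1 n = X ^ (n + 1) - (n + 1 : ℤ[X]) * X + (n : ℤ[X]) := by
  linear_combination (X - 1) * sub_one_mul_f1 n + X * mul_geom_sum (X : ℤ[X]) n

section Roots

variable {A : Type*} [CommRing A] {n : ℕ} {α : A}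

theorem mul_geom_sum_eq_of_aeval_f1_eq_zero (hα : aeval α (f1 n) = 0) :
    α * ∑ i ∈ range n, α ^ i = n := by
  have h := congrArg (aeval α) (sub_one_mul_f1 n)
  simp only [map_mul, map_sub, map_sum, map_pow, map_natCast, aeval_X, map_one, hα,
    mul_zero] at h
  exact sub_eq_zero.mp h.symm

theorem pow_succ_eq_of_aeval_f1_eq_zero (hα : aeval α (f1 n) = 0) :
    α ^ (n + 1) = (n + 1) * α - n := by
  have h := congrArg (aeval α) (sub_one_sq_mul_f1 n)
  simp only [map_mul, map_sub, map_add, map_pow, map_natCast, aeval_X, map_one, hα,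
    mul_zero] at h
  linear_combination -h

end Roots

section Norms

variable {𝕜 : Type*} [RCLike 𝕜] {n : ℕ} {x : 𝕜}

theorem one_le_norm_of_mul_geom_sum_eq (hn : n ≠ 0) (h : x * ∑ i ∈ range n, x ^ i = n) :
    1 ≤ ‖x‖ := by
  by_contra! hx
  have hsum : ‖∑ i ∈ range n, x ^ i‖ ≤ n := by
    refine (norm_sum_le _ _).trans ?_
    simpa using sum_le_sum fun i (_ : i ∈ range n) =>
      (norm_pow x i).trans_le (pow_le_one₀ (norm_nonneg x) hx.le)
  have : (n : ℝ) < n :=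
    calc (n : ℝ) = ‖x‖ * ‖∑ i ∈ range n, x ^ i‖ := by rw [← norm_mul, h, RCLike.norm_natCast]
      _ ≤ ‖x‖ * n := by gcongr
      _ < 1 * n := by gcongr
      _ = n := one_mul _
  exact this.false

theorem norm_pow_le_two_mul_add_one (hx : 1 ≤ ‖x‖) (h : x ^ (n + 1) = (n + 1) * x - n) :
    ‖x‖ ^ n ≤ 2 * n + 1 := by
  have hnorm : ‖x‖ ^ n * ‖x‖ ≤ (2 * n + 1) * ‖x‖ :=
    calc ‖x‖ ^ n * ‖x‖ = ‖(n + 1) * x - n‖ := by rw [← pow_succ, ← norm_pow, h]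
      _ ≤ (n + 1) * ‖x‖ + n := by
        refine (norm_sub_le _ _).trans_eq ?_
        rw [norm_mul, ← Nat.cast_succ, RCLike.norm_natCast, RCLike.norm_natCast]
        push_cast
        ring
      _ ≤ (2 * n + 1) * ‖x‖ := by nlinarith
  exact le_of_mul_le_mul_right hnorm (by linarith)

end Norms

theorem Real.lt_rpow_div_of_pow_lt {r a : ℝ} {m n : ℕ} (hr : 0 ≤ r) (ha : 0 ≤ a) (hn : n ≠ 0)
    (h : r ^ n < a ^ m) : r < a ^ ((m : ℝ) / n) := by
  rwa [← pow_lt_pow_iff_left₀ hr (by positivity) hn, ← Real.rpow_natCast (a ^ _),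
    ← Real.rpow_mul ha, div_mul_cancel₀ _ (by positivity), Real.rpow_natCast]

/-- Every complex root `α` of `f1 n` (for `n ≥ 2`) satisfies `1 ≤ |α| < (n+1)^(2/n)`. -/
theorem stmt0 (n : ℕ) (hn : 2 ≤ n) (α : ℂ) (hα : Polynomial.aeval α (f1 n) = 0) :
    1 ≤ ‖α‖ ∧ ‖α‖ < ((n : ℝ) + 1) ^ ((2 : ℝ) / n) := by
  have hn0 : n ≠ 0 := by omega
  have hlower : 1 ≤ ‖α‖ :=
    one_le_norm_of_mul_geom_sum_eq hn0 (mul_geom_sum_eq_of_aeval_f1_eq_zero hα)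
  have hpow : ‖α‖ ^ n < ((n : ℝ) + 1) ^ 2 := by
    have hbound := norm_pow_le_two_mul_add_one hlower (pow_succ_eq_of_aeval_f1_eq_zero hα)
    have hn1 : (1 : ℝ) ≤ n := by exact_mod_cast hn0.bot_lt
    nlinarith
  exact ⟨hlower, by exact_mod_cast Real.lt_rpow_div_of_pow_lt (norm_nonneg α) (by positivity) hn0 hpow⟩
end

section
/- Let p be a prime number, n ≥ 1 an integer, and a_0, a_1, …, a_n integers with 0 ≤ a_i < p for all i, a_0 ≠ 0 and a_n ≠ 0. Set N = Σ_{i=0}^{n} a_i·p^i, and let g(X) = a_n X^n + a_{n-1} X^{n-1} + ⋯ + a_1 X + a_0 − N ∈ ℤ[X]. Then every complex root α of g satisfies p ≤ |α| < p². -/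
/-!
Write `f = ∑ aᵢ Xⁱ`, so that the roots of `g` are the `z` with `f z = f p = N`. If `‖z‖ < p`, the
triangle inequality gives `‖f z‖ ≤ ∑ aᵢ ‖z‖ⁱ < N`, so every root has modulus at least `p`. The
moduli of the `n` roots of `g` multiply to `|a₀ - N| / aₙ < (aₙ + 1) pⁿ / aₙ`; as `n - 1` of them
are at least `p`, any single one is below `(aₙ + 1) p / aₙ ≤ 2p ≤ p²`.
-/

open Polynomial Finset NNReal

theorem sum_mul_pow_lt_pow_of_digits {b : ℤ} {a : ℕ → ℤ} {m : ℕ}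
    (ha : ∀ i < m, 0 ≤ a i ∧ a i < b) : ∑ i ∈ range m, a i * b ^ i < b ^ m := by
  induction m with
  | zero => simp
  | succ m ih =>
    obtain ⟨ham0, hamb⟩ := ha m m.lt_succ_self
    have hsum := ih fun i hi => ha i (Nat.lt_succ_of_lt hi)
    have hb : 0 ≤ b ^ m := pow_nonneg (ham0.trans hamb.le) m
    rw [sum_range_succ, pow_succ]
    nlinarith

theorem abs_sub_sum_mul_pow_lt_of_digits {b : ℤ} {a : ℕ → ℤ} {n : ℕ}
    (ha : ∀ i ≤ n, 0 ≤ a i ∧ a i < b) :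
    |a 0 - ∑ i ∈ range (n + 1), a i * b ^ i| < (a n + 1) * b ^ n := by
  have hb : 0 ≤ b := (ha 0 n.zero_le).1.trans (ha 0 n.zero_le).2.le
  have hle : a 0 ≤ ∑ i ∈ range (n + 1), a i * b ^ i := by
    simpa using single_le_sum (fun i hi => mul_nonneg (ha i (by grind)).1 (pow_nonneg hb i))
      (mem_range.2 n.succ_pos)
  have hlt := sum_mul_pow_lt_pow_of_digits fun i (hi : i < n) => ha i hi.le
  rw [abs_sub_comm, abs_of_nonneg (sub_nonneg.2 hle), sum_range_succ]
  linarith [(ha 0 n.zero_le).1]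

theorem le_norm_of_sum_mul_pow_le_norm {n : ℕ} (hn : n ≠ 0) {c : ℕ → ℝ}
    (hc : ∀ i ≤ n, 0 ≤ c i) (hcn : 0 < c n) {t : ℝ} {z : ℂ}
    (h : ∑ i ∈ range (n + 1), c i * t ^ i ≤ ‖∑ i ∈ range (n + 1), (c i : ℂ) * z ^ i‖) :
    t ≤ ‖z‖ := by
  by_contra! hzt
  have hnorm : ‖∑ i ∈ range (n + 1), (c i : ℂ) * z ^ i‖ ≤ ∑ i ∈ range (n + 1), c i * ‖z‖ ^ i := by
    refine (norm_sum_le _ _).trans (sum_le_sum fun i hi => ?_)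
    rw [norm_mul, norm_pow, Complex.norm_real, Real.norm_of_nonneg (hc i (by grind))]
  have hlt : ∑ i ∈ range (n + 1), c i * ‖z‖ ^ i < ∑ i ∈ range (n + 1), c i * t ^ i := by
    refine sum_lt_sum (fun i hi => ?_) ⟨n, self_mem_range_succ n, ?_⟩
    · exact mul_le_mul_of_nonneg_left (pow_le_pow_left₀ (norm_nonneg z) hzt.le i) (hc i (by grind))
    · exact mul_lt_mul_of_pos_left (pow_lt_pow_left₀ hzt (norm_nonneg z) hn) hcn
  linarith

theorem Polynomial.norm_leadingCoeff_mul_norm_root_mul_pow_le {f : ℂ[X]} {t : ℝ} (ht : 0 ≤ t)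
    (hroots : ∀ β ∈ f.roots, t ≤ ‖β‖) {α : ℂ} (hα : α ∈ f.roots) :
    ‖f.leadingCoeff‖ * (‖α‖ * t ^ (f.natDegree - 1)) ≤ ‖f.coeff 0‖ := by
  classical
  lift t to ℝ≥0 using ht
  have hsplit := IsAlgClosed.splits f
  suffices ‖f.leadingCoeff‖₊ * (‖α‖₊ * t ^ (f.natDegree - 1)) ≤ ‖f.coeff 0‖₊ by
    exact_mod_cast this
  rw [hsplit.coeff_zero_eq_leadingCoeff_mul_prod_roots, ← Multiset.prod_erase hα]
  simp only [nnnorm_mul, nnnorm_pow, nnnorm_neg, nnnorm_one, one_pow, one_mul]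
  gcongr
  rw [hsplit.natDegree_eq_card_roots, ← Multiset.card_erase_add_one hα, Nat.add_sub_cancel,
    ← Multiset.card_map nnnormHom, ← nnnormHom_apply, map_multiset_prod]
  exact Multiset.pow_card_le_prod fun x hx => by
    obtain ⟨β, hβ, rfl⟩ := Multiset.mem_map.mp hx
    exact_mod_cast hroots β (Multiset.mem_of_mem_erase hβ)

theorem Polynomial.abs_leadingCoeff_mul_norm_aroot_mul_pow_le {g : ℤ[X]} (hg : g ≠ 0) {t : ℝ}
    (ht : 0 ≤ t) (hroots : ∀ z : ℂ, aeval z g = 0 → t ≤ ‖z‖) {α : ℂ} (hα : aeval α g = 0) :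
    |(g.leadingCoeff : ℝ)| * (‖α‖ * t ^ (g.natDegree - 1)) ≤ |(g.coeff 0 : ℝ)| := by
  have hinj := (algebraMap ℤ ℂ).injective_int
  have := (g.map (algebraMap ℤ ℂ)).norm_leadingCoeff_mul_norm_root_mul_pow_le ht
    (fun β hβ => hroots β (mem_aroots.1 hβ).2) (mem_aroots.2 ⟨hg, hα⟩)
  rwa [natDegree_map_eq_of_injective hinj, leadingCoeff_map_of_injective hinj, coeff_map,
    algebraMap_int_eq, eq_intCast, eq_intCast, Complex.norm_intCast, Complex.norm_intCast] at this

section DigitPolynomial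

variable {R : Type*} [Ring R] (a : ℕ → R) (c : R)

theorem Polynomial.coeff_sum_C_mul_X_pow_sub_C (m k : ℕ) :
    (∑ i ∈ range m, C (a i) * X ^ i - C c).coeff k =
      (if k < m then a k else 0) - if k = 0 then c else 0 := by
  simp only [coeff_sub, finsetSum_coeff, coeff_C_mul_X_pow, coeff_C, sum_ite_eq, mem_range]

theorem Polynomial.coeff_zero_sum_C_mul_X_pow_sub_C (n : ℕ) :
    (∑ i ∈ range (n + 1), C (a i) * X ^ i - C c).coeff 0 = a 0 - c := by
  rw [coeff_sum_C_mul_X_pow_sub_C, if_pos n.succ_pos, if_pos rfl]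

variable {a} {n : ℕ}

theorem Polynomial.natDegree_sum_C_mul_X_pow_sub_C (hn : n ≠ 0) (han : a n ≠ 0) :
    (∑ i ∈ range (n + 1), C (a i) * X ^ i - C c).natDegree = n := by
  refine natDegree_eq_of_le_of_coeff_ne_zero (natDegree_le_iff_coeff_eq_zero.2 fun k hk => ?_) ?_
  all_goals rw [coeff_sum_C_mul_X_pow_sub_C]; grind

theorem Polynomial.leadingCoeff_sum_C_mul_X_pow_sub_C (hn : n ≠ 0) (han : a n ≠ 0) :
    (∑ i ∈ range (n + 1), C (a i) * X ^ i - C c).leadingCoeff = a n := by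
  rw [leadingCoeff, natDegree_sum_C_mul_X_pow_sub_C c hn han, coeff_sum_C_mul_X_pow_sub_C]
  grind

end DigitPolynomial

theorem natCast_le_norm_of_aeval_sum_C_mul_X_pow_sub_C {p n : ℕ} (hn : n ≠ 0) {a : ℕ → ℤ}
    (ha : ∀ i ≤ n, 0 ≤ a i) (han : a n ≠ 0) {z : ℂ}
    (hz : aeval z (∑ i ∈ range (n + 1), C (a i) * X ^ i -
      C (∑ i ∈ range (n + 1), a i * (p : ℤ) ^ i)) = 0) :
    (p : ℝ) ≤ ‖z‖ := by
  have hval : ∑ i ∈ range (n + 1), (a i : ℂ) * z ^ i = ∑ i ∈ range (n + 1), a i * (p : ℤ) ^ i := by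
    simpa [sub_eq_zero] using hz
  refine le_norm_of_sum_mul_pow_le_norm (c := fun i => (a i : ℝ)) hn
    (fun i hi => by exact_mod_cast ha i hi) (by exact_mod_cast (ha n le_rfl).lt_of_ne' han) ?_
  push_cast
  rw [hval, Complex.norm_intCast]
  push_cast
  exact le_abs_self _

theorem stmt2_general (p : ℕ) (n : ℕ) (hn : 1 ≤ n) (a : ℕ → ℤ)
    (ha : ∀ i ≤ n, 0 ≤ a i ∧ a i < (p : ℤ)) (han : a n ≠ 0)
    (N : ℤ) (hN : N = ∑ i ∈ Finset.range (n + 1), a i * (p : ℤ) ^ i)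
    (g : Polynomial ℤ)
    (hg : g = (∑ i ∈ Finset.range (n + 1), C (a i) * X ^ i) - C N)
    (α : ℂ) (hα : Polynomial.aeval α g = 0) :
    (p : ℝ) ≤ ‖α‖ ∧ ‖α‖ < (p : ℝ) ^ 2 := by
  subst hN
  have han_one : (1 : ℝ) ≤ a n := by exact_mod_cast (ha n le_rfl).1.lt_of_ne' han
  have hp : (2 : ℝ) ≤ p := by exact_mod_cast (by grind : (2 : ℤ) ≤ p)
  have hlow : ∀ z : ℂ, aeval z g = 0 → (p : ℝ) ≤ ‖z‖ := fun z hz =>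
    natCast_le_norm_of_aeval_sum_C_mul_X_pow_sub_C (by omega) (fun i hi => (ha i hi).1) han
      (hg ▸ hz)
  refine ⟨hlow α hα, ?_⟩
  have hdeg : g.natDegree = n := hg ▸ natDegree_sum_C_mul_X_pow_sub_C _ (by omega) han
  have hprod := abs_leadingCoeff_mul_norm_aroot_mul_pow_le
    (ne_zero_of_natDegree_gt (hdeg ▸ hn)) (Nat.cast_nonneg p) hlow hα
  rw [hdeg, hg, leadingCoeff_sum_C_mul_X_pow_sub_C _ (by omega) han,
    coeff_zero_sum_C_mul_X_pow_sub_C] at hprod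
  have hcancel : (a n * ‖α‖) * (p : ℝ) ^ (n - 1) < ((a n + 1) * p) * (p : ℝ) ^ (n - 1) :=
    calc (a n * ‖α‖) * (p : ℝ) ^ (n - 1) = |(a n : ℝ)| * (‖α‖ * p ^ (n - 1)) := by
          rw [abs_of_pos (by linarith), mul_assoc]
      _ ≤ _ := hprod
      _ < (a n + 1) * p ^ n := by exact_mod_cast abs_sub_sum_mul_pow_lt_of_digits ha
      _ = ((a n + 1) * p) * (p : ℝ) ^ (n - 1) := by
          rw [mul_assoc, ← pow_succ', Nat.sub_add_cancel hn]
  have hroot_lt := lt_of_mul_lt_mul_right hcancel (by positivity)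
  calc ‖α‖ < 2 * p := by nlinarith
    _ ≤ (p : ℝ) ^ 2 := by nlinarith

/-- Let `p` be prime, `N = Σ_{i=0}^n a_i p^i` with base-`p` digits `a_i`
(`a_0 ≠ 0`, `a_n ≠ 0`), and let `g(X) = Σ_{i=0}^n a_i X^i − N`.
Then every complex root `α` of `g` satisfies `p ≤ |α| < p²`. -/
theorem stmt2 (p : ℕ) (hp : p.Prime) (n : ℕ) (hn : 1 ≤ n) (a : ℕ → ℤ)
    (ha : ∀ i ≤ n, 0 ≤ a i ∧ a i < (p : ℤ)) (ha0 : a 0 ≠ 0) (han : a n ≠ 0)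
    (N : ℤ) (hN : N = ∑ i ∈ Finset.range (n + 1), a i * (p : ℤ) ^ i)
    (g : Polynomial ℤ)
    (hg : g = (∑ i ∈ Finset.range (n + 1), C (a i) * X ^ i) - C N)
    (α : ℂ) (hα : Polynomial.aeval α g = 0) :
    (p : ℝ) ≤ ‖α‖ ∧ ‖α‖ < (p : ℝ) ^ 2 :=
  stmt2_general p n hn a ha han N hN g hg α hα
end

section
/- Let n ≥ 2 be an integer and let β_1, …, β_n be the complex roots of g_{1,n}(X) = X^n + X^{n-1} + ⋯ + X² + X − n, listed with multiplicity (g_{1,n} is monic of degree n and splits over ℂ). Then ∏_{1 ≤ i < j ≤ n} (β_i − β_j)² = (−1)^{(n-1)(n+2)/2} · n^{n-1} · (n+1)^{n} / 2. -/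
open Polynomial

/-- `g1 n = X^n + X^(n-1) + ⋯ + X² + X − n` over `ℤ`. -/
noncomputable def g1 (n : ℕ) : Polynomial ℤ :=
  (∑ k ∈ Finset.Icc 1 n, X ^ k) - C (n : ℤ)

private lemma geom_icc (x : ℂ) (n : ℕ) :
    (x - 1) * ∑ k ∈ Finset.Icc 1 n, x ^ k = x ^ (n + 1) - x := by
  induction n with
  | zero => simp
  | succ m ih =>
    rw [Finset.sum_Icc_succ_top (by omega), mul_add, ih]
    ring

private lemma deriv_icc (x : ℂ) (n : ℕ) :
    (x - 1) * ∑ k ∈ Finset.Icc 1 n, (k : ℂ) * x ^ (k - 1)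
      = ((n : ℂ) + 1) * x ^ n - 1 - ∑ k ∈ Finset.Icc 1 n, x ^ k := by
  induction n with
  | zero => simp
  | succ m ih =>
    rw [Finset.sum_Icc_succ_top (f := fun k => (k : ℂ) * x ^ (k - 1)) (by omega),
        Finset.sum_Icc_succ_top (f := fun k => x ^ k) (by omega)]
    simp only [Nat.add_sub_cancel]
    push_cast
    linear_combination ih

private lemma sign_eq (n : ℕ) (hn : 2 ≤ n) :
    ((-1 : ℂ)) ^ (n * (n - 1) / 2 + n + 1) = (-1) ^ ((n - 1) * (n + 2) / 2) := by
  have hexp : n * (n - 1) / 2 + n + 1 = (n - 1) * (n + 2) / 2 + 2 := by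
    obtain ⟨m, rfl⟩ : ∃ m, n = m + 2 := ⟨n - 2, by omega⟩
    have e : m + 2 - 1 = m + 1 := by omega
    rw [e]
    have h1 : (m + 2) * (m + 1) = m * m + 3 * m + 2 := by ring
    have h2 : (m + 1) * (m + 2 + 2) = m * m + 5 * m + 4 := by ring
    rw [h1, h2]
    omega
  rw [hexp, pow_succ, pow_succ]
  ring

private lemma gauss_icc (n : ℕ) : (∑ k ∈ Finset.Icc 1 n, k) * 2 = n * (n + 1) := by
  induction n with
  | zero => simp
  | succ m ih => rw [Finset.sum_Icc_succ_top (by omega), add_mul, ih]; ring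

/-- If `β 0, …, β (n-1)` are the complex roots of `g1 n` (with multiplicity),
then `∏_{i<j} (β i − β j)² = (−1)^((n−1)(n+2)/2) · n^(n−1) · (n+1)^n / 2`. -/
theorem stmt8 (n : ℕ) (hn : 2 ≤ n) (β : Fin n → ℂ)
    (hroots : (g1 n).map (algebraMap ℤ ℂ) = ∏ i : Fin n, (X - C (β i))) :
    (∏ i : Fin n, ∏ j ∈ Finset.univ.filter (fun j => i < j), (β i - β j) ^ 2)
      = (-1 : ℂ) ^ ((n - 1) * (n + 2) / 2) * (n : ℂ) ^ (n - 1) * ((n : ℂ) + 1) ^ n / 2 := by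
  classical
  have hn0 : (n : ℂ) ≠ 0 := Nat.cast_ne_zero.mpr (by omega)
  have hn1 : ((n : ℂ) + 1) ≠ 0 := by
    have : ((n + 1 : ℕ) : ℂ) ≠ 0 := Nat.cast_ne_zero.mpr (by omega)
    push_cast at this; exact this
  -- explicit form of the mapped polynomial
  have hGmap : (g1 n).map (algebraMap ℤ ℂ)
      = (∑ k ∈ Finset.Icc 1 n, X ^ k) - C (n : ℂ) := by
    simp [g1, Polynomial.map_sub, Polynomial.map_sum, Polynomial.map_pow, Polynomial.map_X,
      Polynomial.map_C]
  set P : Polynomial ℂ := ∏ i : Fin n, (X - C (β i)) with hP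
  have hPG : (∑ k ∈ Finset.Icc 1 n, X ^ k) - C (n : ℂ) = P := by rw [← hGmap, hroots]
  -- evaluation of P at any point
  have hevalP : ∀ x : ℂ, ∏ i : Fin n, (x - β i) = (∑ k ∈ Finset.Icc 1 n, x ^ k) - n := by
    intro x
    have := congrArg (eval x) hPG
    simp only [eval_sub, eval_finset_sum, eval_pow, eval_X, eval_C, hP, eval_prod] at this
    exact this.symm
  -- each root satisfies the sum equation
  have hrootsum : ∀ i, ∑ k ∈ Finset.Icc 1 n, (β i) ^ k = (n : ℂ) := by
    intro i
    have h0 : ∏ j : Fin n, (β i - β j) = 0 :=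
      Finset.prod_eq_zero (Finset.mem_univ i) (sub_self _)
    have := hevalP (β i)
    rw [h0] at this
    linear_combination -this
  -- derivative of P
  have hderiv : derivative P = ∑ k ∈ Finset.Icc 1 n, C (k : ℂ) * X ^ (k - 1) := by
    rw [← hPG, derivative_sub, derivative_C, sub_zero, derivative_sum]
    exact Finset.sum_congr rfl fun k _ => by rw [derivative_X_pow]
  have hevalD : ∀ x : ℂ, eval x (derivative P) = ∑ k ∈ Finset.Icc 1 n, (k : ℂ) * x ^ (k - 1) := by
    intro x
    rw [hderiv]
    simp [eval_finset_sum]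
  -- derivative evaluated at a root is the product over the other indices
  have hDprod : ∀ i, eval (β i) (derivative P)
      = ∏ j ∈ Finset.univ.erase i, (β i - β j) := by
    intro i
    rw [hP, ← Finset.mul_prod_erase _ _ (Finset.mem_univ i), derivative_mul, derivative_X_sub_C]
    simp [eval_prod]
  -- value n(n+1)/2 at the root 1
  have hsumIcc : ∑ k ∈ Finset.Icc 1 n, (k : ℂ) = (n : ℂ) * ((n : ℂ) + 1) / 2 := by
    have h := gauss_icc n
    have : ((∑ k ∈ Finset.Icc 1 n, k : ℕ) : ℂ) * 2 = (n : ℂ) * ((n : ℂ) + 1) := by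
      exact_mod_cast congrArg (Nat.cast : ℕ → ℂ) h
    push_cast at this
    linear_combination this / 2
  have hD1 : ∀ i, β i = 1 → eval (β i) (derivative P) = (n : ℂ) * ((n : ℂ) + 1) / 2 := by
    intro i h
    rw [hevalD, h]
    simp only [one_pow, mul_one]
    exact hsumIcc
  have hval_ne : (n : ℂ) * ((n : ℂ) + 1) / 2 ≠ 0 :=
    div_ne_zero (mul_ne_zero hn0 hn1) two_ne_zero
  -- there is a root equal to 1
  have h1root : ∏ j : Fin n, ((1 : ℂ) - β j) = 0 := by
    rw [hevalP 1]
    simp only [one_pow, Finset.sum_const, Nat.card_Icc, Nat.add_sub_cancel, nsmul_eq_mul, mul_one]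
    exact sub_self _
  obtain ⟨i0, -, hi0⟩ := Finset.prod_eq_zero_iff.mp h1root
  have hβi0 : β i0 = 1 := by linear_combination -hi0
  -- uniqueness of the root 1
  have huniq : ∀ j, j ≠ i0 → β j ≠ 1 := by
    intro j hj h1j
    apply hval_ne
    rw [← hD1 i0 hβi0, hDprod i0]
    exact Finset.prod_eq_zero (Finset.mem_erase.mpr ⟨hj, Finset.mem_univ j⟩)
      (by rw [hβi0, h1j, sub_self])
  -- no root is zero, and product of all roots
  have h0sum : (∑ k ∈ Finset.Icc 1 n, (0 : ℂ) ^ k) = 0 :=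
    Finset.sum_eq_zero fun k hk => zero_pow (by rw [Finset.mem_Icc] at hk; omega)
  have hprod0 : ∏ i : Fin n, (0 - β i) = -(n : ℂ) := by
    rw [hevalP 0, h0sum, zero_sub]
  have hβne0 : ∀ i, β i ≠ 0 := by
    intro i h
    have := hprod0
    rw [Finset.prod_eq_zero (Finset.mem_univ i) (by rw [h, sub_zero])] at this
    exact hn0 (by linear_combination this)
  have hsq : (-1 : ℂ) ^ n * (-1 : ℂ) ^ n = 1 := by
    rw [← pow_add, ← two_mul, pow_mul, neg_one_sq, one_pow]
  have hprodβ' : (-1 : ℂ) ^ n * ∏ i : Fin n, β i = -(n : ℂ) := by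
    rw [← hprod0,
      show ∏ i : Fin n, (0 - β i) = ∏ i : Fin n, (-1) * β i from
        Finset.prod_congr rfl fun i _ => by ring,
      Finset.prod_mul_distrib, Finset.prod_const, Finset.card_univ, Fintype.card_fin]
  have hprodβ : ∏ i : Fin n, β i = (-1 : ℂ) ^ (n + 1) * n := by
    linear_combination ((-1 : ℂ) ^ n) * hprodβ' - (∏ i : Fin n, β i) * hsq
  -- key identity for roots other than 1
  have hkey : ∀ i, i ≠ i0 → β i * eval (β i) (derivative P) = (n : ℂ) * ((n : ℂ) + 1) := by
    intro i hi
    have hb1 : β i - 1 ≠ 0 := sub_ne_zero.mpr (huniq i hi)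
    have hg := geom_icc (β i) n
    have hd := deriv_icc (β i) n
    rw [hrootsum i] at hg hd
    rw [hevalD]
    apply mul_left_cancel₀ hb1
    linear_combination (β i) * hd - ((n : ℂ) + 1) * hg
  -- split `erase i` into indices above and below `i`
  have herase : ∀ i : Fin n, Finset.univ.erase i
      = Finset.univ.filter (fun j => i < j) ∪ Finset.univ.filter (fun j => j < i) := by
    intro i
    ext j
    simp only [Finset.mem_erase, Finset.mem_univ, and_true, Finset.mem_union, Finset.mem_filter,
      true_and]
    constructor
    · intro h
      rcases h.lt_or_gt with h' | h'
      · exact Or.inr h'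
      · exact Or.inl h'
    · rintro (h | h)
      · exact h.ne'
      · exact h.ne
  have hdisj : ∀ i : Fin n,
      Disjoint (Finset.univ.filter (fun j => i < j)) (Finset.univ.filter (fun j => j < i)) := by
    intro i
    rw [Finset.disjoint_left]
    intro a ha hb
    rw [Finset.mem_filter] at ha hb
    exact absurd hb.2 (asymm ha.2)
  have hDsplit : ∀ i, eval (β i) (derivative P)
      = (∏ j ∈ Finset.univ.filter (fun j => i < j), (β i - β j))
        * ∏ j ∈ Finset.univ.filter (fun j => j < i), (β i - β j) := by
    intro i
    rw [hDprod i, herase i, Finset.prod_union (hdisj i)]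
  have hswap : (∏ i : Fin n, ∏ j ∈ Finset.univ.filter (fun j => j < i), (β i - β j))
      = ∏ i : Fin n, ∏ j ∈ Finset.univ.filter (fun j => i < j), (β j - β i) := by
    exact Finset.prod_comm' (by intro x y; simp [Finset.mem_filter])
  -- cardinality of the upper filter
  have hcard : ∀ i : Fin n, (Finset.univ.filter (fun j => i < j)).card = n - 1 - (i : ℕ) := by
    intro i
    rw [show Finset.univ.filter (fun j => i < j) = Finset.Ioi i by
      ext j; simp [Finset.mem_Ioi]]
    exact Fin.card_Ioi i
  have hsumcard : ∑ i : Fin n, (n - 1 - (i : ℕ)) = n * (n - 1) / 2 := by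
    rw [Fin.sum_univ_eq_sum_range (fun i => n - 1 - i) n]
    have h := Finset.sum_range_reflect (fun j => j) n
    rw [h, Finset.sum_range_id]
  set T : ℂ := ∏ i : Fin n, ∏ j ∈ Finset.univ.filter (fun j => i < j), (β i - β j) ^ 2 with hT
  have hTsign : ∏ i : Fin n, eval (β i) (derivative P)
      = (-1 : ℂ) ^ (n * (n - 1) / 2) * T := by
    calc ∏ i : Fin n, eval (β i) (derivative P)
        = ∏ i : Fin n, ((∏ j ∈ Finset.univ.filter (fun j => i < j), (β i - β j))
            * ∏ j ∈ Finset.univ.filter (fun j => j < i), (β i - β j)) :=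
          Finset.prod_congr rfl fun i _ => hDsplit i
      _ = (∏ i : Fin n, ∏ j ∈ Finset.univ.filter (fun j => i < j), (β i - β j))
            * ∏ i : Fin n, ∏ j ∈ Finset.univ.filter (fun j => j < i), (β i - β j) :=
          Finset.prod_mul_distrib
      _ = ∏ i : Fin n, ((∏ j ∈ Finset.univ.filter (fun j => i < j), (β i - β j))
            * ∏ j ∈ Finset.univ.filter (fun j => i < j), (β j - β i)) := by
          rw [hswap, ← Finset.prod_mul_distrib]
      _ = ∏ i : Fin n, ∏ j ∈ Finset.univ.filter (fun j => i < j), ((-1) * (β i - β j) ^ 2) := by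
          refine Finset.prod_congr rfl fun i _ => ?_
          rw [← Finset.prod_mul_distrib]
          exact Finset.prod_congr rfl fun j _ => by ring
      _ = ∏ i : Fin n, ((-1 : ℂ) ^ (n - 1 - (i : ℕ))
            * ∏ j ∈ Finset.univ.filter (fun j => i < j), (β i - β j) ^ 2) := by
          refine Finset.prod_congr rfl fun i _ => ?_
          rw [Finset.prod_mul_distrib, Finset.prod_const, hcard i]
      _ = (-1 : ℂ) ^ (n * (n - 1) / 2) * T := by
          rw [Finset.prod_mul_distrib, Finset.prod_pow_eq_pow_sum, hsumcard]
  -- assemble the product of derivative values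
  set E : ℂ := ∏ i ∈ Finset.univ.erase i0, eval (β i) (derivative P) with hE'
  have h1 : (∏ i ∈ Finset.univ.erase i0, β i) * E = ((n : ℂ) * ((n : ℂ) + 1)) ^ (n - 1) := by
    rw [hE', ← Finset.prod_mul_distrib,
      Finset.prod_congr rfl (fun i hi => hkey i (Finset.mem_erase.mp hi).1),
      Finset.prod_const, Finset.card_erase_of_mem (Finset.mem_univ i0), Finset.card_univ,
      Fintype.card_fin]
  have hQ : ∏ i ∈ Finset.univ.erase i0, β i = (-1 : ℂ) ^ (n + 1) * n := by
    have h := Finset.mul_prod_erase Finset.univ β (Finset.mem_univ i0)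
    rw [hβi0, one_mul] at h
    rw [h, hprodβ]
  rw [hQ] at h1
  have hPD : ∏ i : Fin n, eval (β i) (derivative P) = (n : ℂ) * ((n : ℂ) + 1) / 2 * E := by
    rw [← Finset.mul_prod_erase Finset.univ _ (Finset.mem_univ i0), hD1 i0 hβi0, hE']
  -- final algebra
  set s : ℂ := (-1 : ℂ) ^ (n * (n - 1) / 2) with hs'
  set u : ℂ := (-1 : ℂ) ^ (n + 1) with hu'
  have hs2 : s * s = 1 := by
    rw [hs', ← pow_add, ← two_mul, pow_mul, neg_one_sq, one_pow]
  have hu2 : u * u = 1 := by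
    rw [hu', ← pow_add, ← two_mul, pow_mul, neg_one_sq, one_pow]
  have hTval : T = s * ((n : ℂ) * ((n : ℂ) + 1) / 2 * E) := by
    rw [← hPD, hTsign, ← mul_assoc, hs2, one_mul]
  have hsgn : (-1 : ℂ) ^ (n * (n - 1) / 2 + n + 1) = s * u := by
    rw [add_assoc, pow_add, hs', hu']
  have hpow : ((n : ℂ) + 1) ^ n = ((n : ℂ) + 1) ^ (n - 1) * ((n : ℂ) + 1) := by
    rw [← pow_succ, Nat.sub_add_cancel (by omega)]
  rw [← sign_eq n hn, hTval, hsgn, hpow]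
  rw [mul_pow] at h1
  linear_combination (s * ((n : ℂ) + 1) * u / 2) * h1
    - (s * ((n : ℂ) + 1) * (n : ℂ) * E / 2) * hu2
end

section
/- Let n ≥ 4 be an integer and let K_n be the splitting field of f_{1,n}(X) over ℚ. Then K_n contains a square root of the following rational number d: if n = 4l then d = −2l; if n = 4l+1 then d = 2l+1; if n = 4l+2 then d = 2l+1; if n = 4l+3 then d = −2(l+1). That is, there exists x ∈ K_n with x² = d. -/
/-!
Write `f = f1Q n`, of degree `m = n - 1`, with roots `r₁, …, rₘ` in a splitting field.
Since `(X - 1)² f = X^(n+1) - (n+1) X + n`, differentiating at a root gives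
`rᵢ (rᵢ - 1) f'(rᵢ) = n (n+1)`; multiplying over the roots and using
`∏ rᵢ (rᵢ - 1) = f(0) f(1) = n · n(n+1)/2` gives `∏ f'(rᵢ) = 2 n^(n-3) (n+1)^(n-2)`.
On the other hand `∏ᵢ f'(rᵢ) = ∏_{i ≠ j} (rᵢ - rⱼ) = (-1)^(m(m-1)/2) Δ²` with
`Δ = ∏_{i < j} (rᵢ - rⱼ)`, so the discriminant `(-1)^(m(m-1)/2) · 2 n^(n-3) (n+1)^(n-2)`
is a square in the splitting field. Removing its rational square factors, which depend on
`n mod 4`, leaves `d`.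
-/

open Polynomial

/-- `f1Q n = X^(n-1) + 2 X^(n-2) + ⋯ + (n-1) X + n = Σ_{k=1}^n k · X^(n-k)` over `ℚ`. -/
noncomputable def f1Q (n : ℕ) : Polynomial ℚ :=
  ∑ k ∈ Finset.Icc 1 n, C (k : ℚ) * X ^ (n - k)

open Finset

theorem Finset.exists_prod_prod_erase_eq_neg_one_pow_mul_sq {ι R : Type*} [DecidableEq ι]
    [CommRing R] (f : ι → ι → R) (hf : ∀ i j, f j i = -f i j) (s : Finset ι) :
    ∃ D : R, ∏ i ∈ s, ∏ j ∈ s.erase i, f i j = (-1) ^ (#s).choose 2 * D ^ 2 := by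
  induction s using Finset.induction_on with
  | empty => exact ⟨1, by simp⟩
  | insert a s ha ih =>
    obtain ⟨D, hD⟩ := ih
    have herase (i) (hi : i ∈ s) :
        ∏ j ∈ (insert a s).erase i, f i j = f i a * ∏ j ∈ s.erase i, f i j := by
      rw [erase_insert_of_ne (ne_of_mem_of_not_mem hi ha).symm,
        prod_insert fun h => ha (mem_of_mem_erase h)]
    have hcol : ∏ i ∈ s, f i a = (-1) ^ #s * ∏ j ∈ s, f a j := by
      rw [← prod_neg]
      exact prod_congr rfl fun i _ => hf a i
    refine ⟨D * ∏ j ∈ s, f a j, ?_⟩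
    rw [prod_insert ha, erase_insert ha, prod_congr rfl herase, prod_mul_distrib, hD, hcol,
      card_insert_of_notMem ha, Nat.choose_succ_succ', Nat.choose_one_right, pow_add]
    ring

theorem Polynomial.eval_derivative_prod_X_sub_C {ι R : Type*} [DecidableEq ι] [CommRing R]
    {s : Finset ι} (e : ι → R) {i : ι} (hi : i ∈ s) :
    (derivative (∏ j ∈ s, (X - C (e j)))).eval (e i) = ∏ j ∈ s.erase i, (e i - e j) := by
  rw [← mul_prod_erase s _ hi, derivative_mul]
  simp [eval_prod]

theorem Polynomial.Splits.exists_prod_roots_eval_derivative_eq {K : Type*} [Field K] {p : K[X]}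
    (hp : p.Splits) (hm : p.Monic) :
    ∃ D : K, (p.roots.map fun r => p.derivative.eval r).prod =
      (-1) ^ p.natDegree.choose 2 * D ^ 2 := by
  classical
  have hprod : p = ∏ r : p.roots, (X - C (r : K)) := by
    rw [prod_eq_multiset_prod, Multiset.map_univ p.roots fun r => X - C r]
    exact hp.eq_prod_roots_of_monic hm
  obtain ⟨D, hD⟩ := exists_prod_prod_erase_eq_neg_one_pow_mul_sq
    (fun r s : p.roots => (r : K) - s) (fun _ _ => (neg_sub _ _).symm) univ
  refine ⟨D, ?_⟩
  rw [hp.natDegree_eq_card_roots, ← Multiset.card_coe, ← card_univ, ← hD,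
    prod_eq_multiset_prod, ← Multiset.map_univ p.roots]
  refine prod_congr rfl fun r _ => ?_
  have := eval_derivative_prod_X_sub_C (fun r : p.roots => (r : K)) (mem_univ r)
  rwa [← hprod] at this

theorem neg_one_pow_choose_two {R : Type*} [Monoid R] [HasDistribNeg R] (m : ℕ) :
    (-1 : R) ^ m.choose 2 = (-1) ^ (m / 2) := by
  induction m using Nat.twoStepInduction with
  | zero => rfl
  | one => rfl
  | more m ih _ =>
    have hchoose : (m + 2).choose 2 = m.choose 2 + 2 * m + 1 := by
      simp [Nat.choose_succ_succ', Nat.choose_one_right]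
      ring
    rw [hchoose, (by omega : (m + 2) / 2 = m / 2 + 1), pow_succ, pow_succ, pow_add, pow_mul, ih]
    simp

theorem exists_sq_eq_algebraMap_of_eq_mul_sq {K : Type*} [Field K] [Algebra ℚ K] {q d : ℚ}
    (hq : ∃ Δ : K, Δ ^ 2 = algebraMap ℚ K q) (hqd : ∃ c : ℚ, c ≠ 0 ∧ q = d * c ^ 2) :
    ∃ x : K, x ^ 2 = algebraMap ℚ K d := by
  obtain ⟨Δ, hΔ⟩ := hq
  obtain ⟨c, hc, rfl⟩ := hqd
  refine ⟨Δ / algebraMap ℚ K c, ?_⟩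
  have hc' : algebraMap ℚ K c ^ 2 ≠ 0 := pow_ne_zero 2 ((_root_.map_ne_zero _).mpr hc)
  rw [div_pow, hΔ, map_mul, map_pow, mul_div_cancel_right₀ _ hc']

lemma f1Q_succ (n : ℕ) : f1Q (n + 1) = X * f1Q n + C ((n : ℚ) + 1) := by
  unfold f1Q
  rw [sum_Icc_succ_top (by omega), mul_sum, Nat.sub_self, pow_zero, mul_one]
  push_cast
  congr 1
  refine sum_congr rfl fun k hk => ?_
  rw [(by grind : n + 1 - k = n - k + 1), pow_succ]
  ring

lemma X_sub_one_sq_mul_f1Q (n : ℕ) :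
    (X - 1) ^ 2 * f1Q n = X ^ (n + 1) - C ((n : ℚ) + 1) * X + C (n : ℚ) := by
  induction n with
  | zero => simp [f1Q]
  | succ n ih =>
    rw [f1Q_succ]
    push_cast
    simp only [C_add, C_1] at ih ⊢
    linear_combination (X : ℚ[X]) * ih

lemma f1Q_eval_zero {n : ℕ} (hn : 1 ≤ n) : (f1Q n).eval 0 = n := by
  obtain ⟨m, rfl⟩ := Nat.exists_eq_add_of_le' hn
  simp [f1Q_succ]

lemma f1Q_eval_one (n : ℕ) : (f1Q n).eval 1 = n * (n + 1) / 2 := by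
  induction n with
  | zero => simp [f1Q]
  | succ n ih =>
    rw [f1Q_succ]
    simp only [eval_add, eval_mul, eval_X, eval_C, one_mul, ih]
    push_cast
    ring

lemma f1Q_monic {n : ℕ} (hn : 1 ≤ n) : (f1Q n).Monic := by
  have h : ((X - C 1) ^ 2 * f1Q n).Monic := by
    rw [C_1, X_sub_one_sq_mul_f1Q]
    monicity!
    all_goals omega
  exact ((monic_X_sub_C 1).pow 2).of_mul_monic_left h

lemma f1Q_natDegree {n : ℕ} (hn : 1 ≤ n) : (f1Q n).natDegree = n - 1 := by
  have h := natDegree_mul ((monic_X_sub_C (1 : ℚ)).pow 2).ne_zero (f1Q_monic hn).ne_zero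
  rw [natDegree_pow, natDegree_X_sub_C, C_1, X_sub_one_sq_mul_f1Q] at h
  have : (X ^ (n + 1) - C ((n : ℚ) + 1) * X + C (n : ℚ)).natDegree = n + 1 := by
    compute_degree!
    all_goals first | omega | (rw [if_neg (by omega)]; decide)
  omega

lemma mul_sub_one_mul_aeval_derivative_f1Q {K : Type*} [Field K] [Algebra ℚ K] {n : ℕ}
    (hn : 1 ≤ n) {r : K} (hr : aeval r (f1Q n) = 0) :
    r * (r - 1) * aeval r (derivative (f1Q n)) = n * (n + 1) := by
  have hkey := X_sub_one_sq_mul_f1Q n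
  have hval : r ^ (n + 1) - (n + 1) * r + n = 0 := by
    simpa [hr] using (congrArg (aeval r) hkey).symm
  have hder : (r - 1) ^ 2 * aeval r (derivative (f1Q n)) = (n + 1) * r ^ n - (n + 1) := by
    simpa [hr, derivative_mul] using congrArg (aeval r ∘ derivative) hkey
  have hr1 : r - 1 ≠ 0 := by
    rw [sub_ne_zero]
    rintro rfl
    rw [← map_one (algebraMap ℚ K), aeval_algebraMap_apply_eq_algebraMap_eval, f1Q_eval_one,
      map_eq_zero] at hr
    have : (0 : ℚ) < n := by exact_mod_cast hn
    exact (by positivity : (n : ℚ) * (n + 1) / 2 ≠ 0) hr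
  apply mul_left_cancel₀ hr1
  linear_combination r * hder + ((n : K) + 1) * hval

-- The discriminant of `f1Q n`; the exponents truncate unless `3 ≤ n`.
def f1QDiscr (n : ℕ) : ℚ := (-1) ^ (n - 1).choose 2 * 2 * n ^ (n - 3) * (n + 1) ^ (n - 2)

lemma f1QDiscr_add_three (m : ℕ) :
    f1QDiscr (m + 3) = (-1) ^ ((m + 2) / 2) * 2 * (m + 3) ^ m * (m + 4) ^ (m + 1) := by
  rw [f1QDiscr, Nat.add_sub_cancel, (by omega : m + 3 - 1 = m + 2),
    (by omega : m + 3 - 2 = m + 1), neg_one_pow_choose_two]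
  push_cast
  ring

lemma prod_aroots_aeval_derivative_f1Q {K : Type*} [Field K] [Algebra ℚ K] {n : ℕ}
    (hn : 1 ≤ n) (hK : ((f1Q n).map (algebraMap ℚ K)).Splits) :
    (n : K) * (n * (n + 1) / 2) *
        (((f1Q n).aroots K).map fun r => aeval r (derivative (f1Q n))).prod =
      ((n : K) * (n + 1)) ^ (n - 1) := by
  have hroots :
      (((f1Q n).aroots K).map fun r => r * (r - 1)).prod = (n : K) * (n * (n + 1) / 2) :=
    calc (((f1Q n).aroots K).map fun r => r * (r - 1)).prod
        = (((f1Q n).aroots K).map fun r => (0 - r) * (1 - r)).prod := by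
          congr 1; exact Multiset.map_congr rfl fun r _ => by ring
      _ = aeval 0 (f1Q n) * aeval 1 (f1Q n) := by
          rw [Multiset.prod_map_mul, hK.aeval_eq_prod_aroots_of_monic (f1Q_monic hn),
            hK.aeval_eq_prod_aroots_of_monic (f1Q_monic hn)]
      _ = n * (n * (n + 1) / 2) := by
          rw [← map_zero (algebraMap ℚ K), ← map_one (algebraMap ℚ K),
            aeval_algebraMap_apply_eq_algebraMap_eval, aeval_algebraMap_apply_eq_algebraMap_eval,
            f1Q_eval_zero hn, f1Q_eval_one]
          simp only [map_mul, map_div₀, map_add, map_natCast, map_one, map_ofNat]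
  rw [← hroots, ← Multiset.prod_map_mul,
    Multiset.map_congr rfl fun r hr =>
      mul_sub_one_mul_aeval_derivative_f1Q hn (mem_aroots.mp hr).2,
    Multiset.map_const', Multiset.prod_replicate, aroots_def, ← hK.natDegree_eq_card_roots,
    natDegree_map, f1Q_natDegree hn]

theorem exists_sq_eq_f1QDiscr {K : Type*} [Field K] [Algebra ℚ K] {n : ℕ} (hn : 3 ≤ n)
    (hK : ((f1Q n).map (algebraMap ℚ K)).Splits) :
    ∃ Δ : K, Δ ^ 2 = algebraMap ℚ K (f1QDiscr n) := by
  have : CharZero K := charZero_of_injective_algebraMap (algebraMap ℚ K).injective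
  obtain ⟨Δ, hΔ⟩ := hK.exists_prod_roots_eval_derivative_eq ((f1Q_monic (by omega)).map _)
  have hprod := prod_aroots_aeval_derivative_f1Q (by omega) hK
  simp only [derivative_map, eval_map_algebraMap, ← aroots_def, natDegree_map,
    f1Q_natDegree (by omega : 1 ≤ n)] at hΔ
  rw [hΔ, neg_one_pow_choose_two] at hprod
  refine ⟨Δ, ?_⟩
  obtain ⟨m, rfl⟩ : ∃ m, n = m + 3 := ⟨n - 3, by omega⟩
  rw [f1QDiscr_add_three, (by omega : m + 3 - 1 = m + 2), mul_pow] at *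
  simp only [map_mul, map_pow, map_neg, map_one, map_ofNat, map_add, map_natCast]
  push_cast at hprod ⊢
  have hsign : ((-1 : K) ^ ((m + 2) / 2)) ^ 2 = 1 := by
    rw [← pow_mul, mul_comm, pow_mul, neg_one_sq, one_pow]
  have hne : ((m : K) + 3) ^ 2 * (m + 4) * (-1) ^ ((m + 2) / 2) ≠ 0 := by
    have : (m : K) + 4 ≠ 0 := by exact_mod_cast (by omega : m + 4 ≠ 0)
    have : (m : K) + 3 ≠ 0 := by exact_mod_cast (by omega : m + 3 ≠ 0)
    simp [*]
  apply mul_left_cancel₀ hne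
  linear_combination 2 * hprod - 2 * ((m : K) + 3) ^ (m + 2) * ((m : K) + 4) ^ (m + 2) * hsign

lemma exists_f1QDiscr_four_mul_eq {l : ℕ} (hl : 1 ≤ l) :
    ∃ c : ℚ, c ≠ 0 ∧ f1QDiscr (4 * l) = -2 * l * c ^ 2 := by
  obtain ⟨k, rfl⟩ := Nat.exists_eq_add_of_le' hl
  refine ⟨2 * (4 * k + 4) ^ (2 * k) * (4 * k + 5) ^ (2 * k + 1), by positivity, ?_⟩
  rw [(by ring : 4 * (k + 1) = 4 * k + 1 + 3), f1QDiscr_add_three,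
    (by omega : (4 * k + 1 + 2) / 2 = 2 * k + 1), pow_succ, pow_mul]
  push_cast
  ring

lemma exists_f1QDiscr_four_mul_add_one_eq {l : ℕ} (hl : 1 ≤ l) :
    ∃ c : ℚ, c ≠ 0 ∧ f1QDiscr (4 * l + 1) = (2 * l + 1) * c ^ 2 := by
  obtain ⟨k, rfl⟩ := Nat.exists_eq_add_of_le' hl
  refine ⟨2 * (4 * k + 5) ^ (2 * k + 1) * (4 * k + 6) ^ (2 * k + 1), by positivity, ?_⟩
  rw [(by ring : 4 * (k + 1) + 1 = 4 * k + 2 + 3), f1QDiscr_add_three,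
    (by omega : (4 * k + 2 + 2) / 2 = 2 * (k + 1)), pow_mul]
  push_cast
  ring

lemma exists_f1QDiscr_four_mul_add_two_eq {l : ℕ} (hl : 1 ≤ l) :
    ∃ c : ℚ, c ≠ 0 ∧ f1QDiscr (4 * l + 2) = (2 * l + 1) * c ^ 2 := by
  obtain ⟨k, rfl⟩ := Nat.exists_eq_add_of_le' hl
  refine ⟨2 * (4 * k + 6) ^ (2 * k + 1) * (4 * k + 7) ^ (2 * k + 2), by positivity, ?_⟩
  rw [(by ring : 4 * (k + 1) + 2 = 4 * k + 3 + 3), f1QDiscr_add_three,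
    (by omega : (4 * k + 3 + 2) / 2 = 2 * (k + 1)), pow_mul]
  push_cast
  ring

lemma exists_f1QDiscr_four_mul_add_three_eq (l : ℕ) :
    ∃ c : ℚ, c ≠ 0 ∧ f1QDiscr (4 * l + 3) = -2 * (l + 1) * c ^ 2 := by
  refine ⟨2 * (4 * l + 3) ^ (2 * l) * (4 * l + 4) ^ (2 * l), by positivity, ?_⟩
  rw [f1QDiscr_add_three, (by omega : (4 * l + 2) / 2 = 2 * l + 1), pow_succ, pow_mul]
  push_cast
  ring

/-- For `n ≥ 4`, the splitting field `K_n` of `f1Q n` over `ℚ` contains a square root of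
`−2l` if `n = 4l`, of `2l+1` if `n = 4l+1` or `n = 4l+2`, and of `−2(l+1)` if `n = 4l+3`. -/
theorem stmt9 (n : ℕ) (hn : 4 ≤ n) :
    (∀ l : ℕ, n = 4 * l →
      ∃ x : (f1Q n).SplittingField, x ^ 2 = algebraMap ℚ (f1Q n).SplittingField (-2 * l)) ∧
    (∀ l : ℕ, n = 4 * l + 1 →
      ∃ x : (f1Q n).SplittingField, x ^ 2 = algebraMap ℚ (f1Q n).SplittingField (2 * l + 1)) ∧
    (∀ l : ℕ, n = 4 * l + 2 →
      ∃ x : (f1Q n).SplittingField, x ^ 2 = algebraMap ℚ (f1Q n).SplittingField (2 * l + 1)) ∧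
    (∀ l : ℕ, n = 4 * l + 3 →
      ∃ x : (f1Q n).SplittingField, x ^ 2 = algebraMap ℚ (f1Q n).SplittingField (-2 * (l + 1))) := by
  have hΔ := exists_sq_eq_f1QDiscr (K := (f1Q n).SplittingField) (by omega)
    (SplittingField.splits _)
  refine ⟨fun l hl => ?_, fun l hl => ?_, fun l hl => ?_, fun l hl => ?_⟩ <;> subst hl <;>
    refine exists_sq_eq_algebraMap_of_eq_mul_sq hΔ ?_
  exacts [exists_f1QDiscr_four_mul_eq (by omega), exists_f1QDiscr_four_mul_add_one_eq (by omega),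
    exists_f1QDiscr_four_mul_add_two_eq (by omega), exists_f1QDiscr_four_mul_add_three_eq l]
end
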